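/- arXiv:2507.01538 — 3 statements merged into one kernel-verified Lean document; each statement's English description precedes it below -/
import Mathlib

section
/- Let M : [0,T] → ℝ be a non-negative continuous function satisfying M(t) ≤ c₁ + c₂ M(t)^κ for all t in [0,T], where c₁, c₂ > 0 and κ > 1. If M(0) ≤ c₁ and c₁ · c₂^(1/(κ-1)) < (1 - 1/κ) · κ^(-1/(κ-1)), then M(t) < c₁ / (1 - 1/κ) for all t in [0,T]. -/
/-!
The barrier `B = c₁ / (1 - 1/κ)` is chosen so that the smallness condition says exactly
`c₂ κ B^(κ-1) < 1`, i.e. `c₁ + c₂ B^κ < B`. Hence `M` can never take the value `B`; since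
`M 0 ≤ c₁ < B` and `M` is continuous on the connected interval, it stays below `B`.
-/

open Set

theorem IsPreconnected.forall_lt_of_forall_ne {X α : Type*} [TopologicalSpace X] [LinearOrder α]
    [TopologicalSpace α] [OrderClosedTopology α] {s : Set X} (hs : IsPreconnected s) {f : X → α}
    (hf : ContinuousOn f s) {a : X} (ha : a ∈ s) {B : α} (hfa : f a < B)
    (hne : ∀ x ∈ s, f x ≠ B) : ∀ x ∈ s, f x < B := by
  intro x hx
  by_contra! hBx
  obtain ⟨y, hy, hfy⟩ := hs.intermediate_value ha hx hf ⟨hfa.le, hBx⟩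
  exact hne y hy hfy

theorem one_sub_one_div_pos {κ : ℝ} (hκ : 1 < κ) : 0 < 1 - 1 / κ := by
  rw [sub_pos, div_lt_one (by linarith)]
  exact hκ

theorem lt_div_one_sub_one_div {c κ : ℝ} (hc : 0 < c) (hκ : 1 < κ) : c < c / (1 - 1 / κ) := by
  have hκ0 : 0 < κ := by linarith
  have hgap := one_sub_one_div_pos hκ
  have : 0 < c * (1 / κ) := by positivity
  rw [lt_div_iff₀ hgap]
  linarith

theorem add_mul_rpow_lt_strauss_barrier {c₁ c₂ κ : ℝ} (hc₁ : 0 < c₁) (hc₂ : 0 ≤ c₂) (hκ : 1 < κ)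
    (hsmall : c₁ * c₂ ^ (1 / (κ - 1)) < (1 - 1 / κ) * κ ^ (-(1 / (κ - 1)))) :
    c₁ + c₂ * (c₁ / (1 - 1 / κ)) ^ κ < c₁ / (1 - 1 / κ) := by
  set B := c₁ / (1 - 1 / κ) with hB_def
  have hκ0 : 0 < κ := by linarith
  have hκ1 : 0 < κ - 1 := by linarith
  have hgap := one_sub_one_div_pos hκ
  have hB : 0 < B := div_pos hc₁ hgap
  have hB_sub : B - c₁ = B / κ := by
    rw [hB_def]
    field_simp
    ring
  have hsmall' : B * (c₂ * κ) ^ (1 / (κ - 1)) < 1 := by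
    rw [Real.mul_rpow hc₂ hκ0.le, hB_def, div_mul_eq_mul_div, div_lt_one hgap, ← mul_assoc]
    calc c₁ * c₂ ^ (1 / (κ - 1)) * κ ^ (1 / (κ - 1))
        < (1 - 1 / κ) * κ ^ (-(1 / (κ - 1))) * κ ^ (1 / (κ - 1)) := by gcongr
      _ = 1 - 1 / κ := by rw [mul_assoc, ← Real.rpow_add hκ0, neg_add_cancel, Real.rpow_zero,
          mul_one]
  have hB_pow : B ^ (κ - 1) * (c₂ * κ) < 1 := by
    have hpow := Real.rpow_lt_one (by positivity) hsmall' hκ1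
    rwa [Real.mul_rpow hB.le (by positivity), ← Real.rpow_mul (by positivity),
      one_div_mul_cancel hκ1.ne', Real.rpow_one] at hpow
  have hBκ : B ^ κ = B ^ (κ - 1) * B := by
    rw [← Real.rpow_add_one hB.ne', sub_add_cancel]
  have hc₂B : c₂ * B ^ κ < B / κ := by
    rw [hBκ, lt_div_iff₀ hκ0]
    calc c₂ * (B ^ (κ - 1) * B) * κ = B ^ (κ - 1) * (c₂ * κ) * B := by ring
      _ < 1 * B := by gcongr
      _ = B := one_mul B
  linarith

theorem strauss_lemma_general (T c₁ c₂ κ : ℝ) (M : ℝ → ℝ)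
    (hc₁ : 0 < c₁) (hc₂ : 0 < c₂) (hκ : 1 < κ)
    (hMcont : ContinuousOn M (Icc 0 T))
    (hMineq : ∀ t ∈ Icc 0 T, M t ≤ c₁ + c₂ * M t ^ κ)
    (hM0 : M 0 ≤ c₁)
    (hsmall : c₁ * c₂ ^ (1 / (κ - 1)) < (1 - 1 / κ) * κ ^ (-(1 / (κ - 1)))) :
    ∀ t ∈ Icc 0 T, M t < c₁ / (1 - 1 / κ) := by
  have hbarrier := add_mul_rpow_lt_strauss_barrier hc₁ hc₂.le hκ hsmall
  intro t ht
  refine isPreconnected_Icc.forall_lt_of_forall_ne hMcont ⟨le_rfl, ht.1.trans ht.2⟩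
    (hM0.trans_lt (lt_div_one_sub_one_div hc₁ hκ)) (fun s hs hMs => ?_) t ht
  have hMs_le := hMineq s hs
  rw [hMs] at hMs_le
  linarith

/-- Strauss barrier lemma: a nonnegative continuous function obeying a superlinear
self-bound with small coefficients stays below the barrier `c₁ / (1 - 1/κ)`. -/
theorem strauss_lemma (T c₁ c₂ κ : ℝ) (M : ℝ → ℝ)
    (hT : 0 ≤ T) (hc₁ : 0 < c₁) (hc₂ : 0 < c₂) (hκ : 1 < κ)
    (hMcont : ContinuousOn M (Icc 0 T))
    (hMnonneg : ∀ t ∈ Icc 0 T, 0 ≤ M t)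
    (hMineq : ∀ t ∈ Icc 0 T, M t ≤ c₁ + c₂ * M t ^ κ)
    (hM0 : M 0 ≤ c₁)
    (hsmall : c₁ * c₂ ^ (1 / (κ - 1)) < (1 - 1 / κ) * κ ^ (-(1 / (κ - 1)))) :
    ∀ t ∈ Icc 0 T, M t < c₁ / (1 - 1 / κ) :=
  strauss_lemma_general T c₁ c₂ κ M hc₁ hc₂ hκ hMcont hMineq hM0 hsmall
end

section
/- Suppose y ∈ L²_loc(0,∞) with distributional derivative y_t ∈ L²_loc(0,∞), and K is a strongly positive kernel with constant η > 0 (meaning ∫₀^t (K∗v)(s)v(s) ds ≥ η ∫₀^t (e^{-·}∗v)(s)v(s) ds for all admissible v and t). Then for all t > 0: ∫₀^t |y(s)|² ds ≤ |y(0)|² + 2η^{-1} ∫₀^t (K∗y)(s) y(s) ds + 2η^{-1} ∫₀^t (K∗y_t)(s) y_t(s) ds. -/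
/-!
Write `e(r) = exp(-r)`, `w = e ∗ y` and `z = e ∗ y'`. Integrating by parts,
`y(s) = e(s) y(0) + w(s) + z(s)`, so `(y - w)² ≤ 2 z² + 2 e² y(0)²` and hence
`y² ≤ 2 w y + 2 z² + 2 e² y(0)²`. Since `z' = y' - z` and `z(0) = 0`,
`∫₀^t z y' = z(t)²/2 + ∫₀^t z²`, so `∫₀^t z² ≤ ∫₀^t (e ∗ y') y'`; and `2 ∫₀^∞ e² = 1`.
This bounds `∫₀^t y²` by `y(0)² + 2 ∫₀^t (e ∗ y) y + 2 ∫₀^t (e ∗ y') y'`, and strong positivity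
replaces `e` by `η⁻¹ K`.
-/

open MeasureTheory

/-- The Laplace convolution `(K ∗ y)(t) = ∫₀^t K(s) y(t - s) ds`. -/
noncomputable def lconv (K y : ℝ → ℝ) (t : ℝ) : ℝ :=
  ∫ s in (0:ℝ)..t, K s * y (t - s)

open Real

theorem lconv_exp_neg_eq (v : ℝ → ℝ) (s : ℝ) :
    lconv (fun r => exp (-r)) v s = exp (-s) * ∫ u in (0:ℝ)..s, exp u * v u := by
  have hsub := intervalIntegral.integral_comp_sub_left (fun u => exp (-s) * (exp u * v u)) s
    (a := 0) (b := s)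
  simp only [sub_self, sub_zero] at hsub
  rw [lconv, ← intervalIntegral.integral_const_mul, ← hsub]
  refine intervalIntegral.integral_congr fun r _ => ?_
  rw [show -r = -s + (s - r) by ring, exp_add]
  ring

theorem hasDerivAt_lconv_exp_neg {v : ℝ → ℝ} (hv : Continuous v) (s : ℝ) :
    HasDerivAt (lconv (fun r => exp (-r)) v) (v s - lconv (fun r => exp (-r)) v s) s := by
  have hF : HasDerivAt (fun s => ∫ u in (0:ℝ)..s, exp u * v u) (exp s * v s) s :=
    ((continuous_exp.mul hv).integral_hasStrictDerivAt 0 s).hasDerivAt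
  rw [funext (lconv_exp_neg_eq v)]
  refine ((hasDerivAt_neg s).exp.mul hF).congr_deriv ?_
  rw [← mul_assoc, ← exp_add, neg_add_cancel, exp_zero]
  ring

theorem lconv_exp_neg_of_hasDerivAt {y y' : ℝ → ℝ} {s : ℝ}
    (hy : ∀ u ∈ Set.uIcc 0 s, HasDerivAt y (y' u) u) (hy' : IntervalIntegrable y' volume 0 s) :
    lconv (fun r => exp (-r)) y' s = y s - exp (-s) * y 0 - lconv (fun r => exp (-r)) y s := by
  rw [lconv_exp_neg_eq, lconv_exp_neg_eq, intervalIntegral.integral_mul_deriv_eq_deriv_mul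
    (fun u _ => hasDerivAt_exp u) hy (continuous_exp.intervalIntegrable 0 s) hy', exp_zero]
  have hexp : exp (-s) * exp s = 1 := by rw [← exp_add, neg_add_cancel, exp_zero]
  linear_combination y s * hexp

theorem integral_mul_eq_of_hasDerivAt_sub {w v : ℝ → ℝ} {t : ℝ}
    (hw : ∀ s ∈ Set.uIcc 0 t, HasDerivAt w (v s - w s) s) (hw0 : w 0 = 0)
    (hv : IntervalIntegrable v volume 0 t) :
    ∫ s in (0:ℝ)..t, w s * v s = w t ^ 2 / 2 + ∫ s in (0:ℝ)..t, w s ^ 2 := by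
  have hcont : ContinuousOn w (Set.uIcc 0 t) := fun s hs =>
    (hw s hs).continuousAt.continuousWithinAt
  have hww : IntervalIntegrable (fun s => w s ^ 2) volume 0 t := (hcont.pow 2).intervalIntegrable
  have hwv : IntervalIntegrable (fun s => w s * v s) volume 0 t := hv.continuousOn_mul hcont
  have hwvw : IntervalIntegrable (fun s => w s * (v s - w s)) volume 0 t := by
    simpa only [mul_sub, sq] using hwv.sub hww
  have hftc : ∫ s in (0:ℝ)..t, w s * (v s - w s) = w t ^ 2 / 2 := by
    rw [intervalIntegral.integral_eq_sub_of_hasDerivAt (f := fun s => w s ^ 2 / 2)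
      (fun s hs => (((hw s hs).pow 2).div_const 2).congr_deriv (by ring)) hwvw, hw0]
    ring
  rw [← hftc, ← intervalIntegral.integral_add hwvw hww]
  exact intervalIntegral.integral_congr fun s _ => by ring

theorem integral_exp_neg_mul_sq_le (c t : ℝ) :
    ∫ s in (0:ℝ)..t, (exp (-s) * c) ^ 2 ≤ c ^ 2 / 2 := by
  have hderiv : ∀ s ∈ Set.uIcc 0 t,
      HasDerivAt (fun s => -exp (-2 * s) / 2 * c ^ 2) ((exp (-s) * c) ^ 2) s := fun s _ => by
    refine ((((hasDerivAt_id' s).const_mul (-2)).exp.neg.div_const 2).mul_const (c ^ 2)).congr_deriv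
      ?_
    rw [show -2 * s = -s + -s by ring, exp_add]
    ring
  rw [intervalIntegral.integral_eq_sub_of_hasDerivAt hderiv
    ((by fun_prop : Continuous _).intervalIntegrable _ _), mul_zero, exp_zero]
  nlinarith [mul_nonneg (exp_pos (-2 * t)).le (sq_nonneg c)]

theorem integral_sq_le_lconv_exp_neg {y y' : ℝ → ℝ} {t : ℝ} (ht : 0 ≤ t)
    (hy : ∀ s, HasDerivAt y (y' s) s) (hy' : IntervalIntegrable y' volume 0 t) :
    ∫ s in (0:ℝ)..t, y s ^ 2
      ≤ y 0 ^ 2 + 2 * (∫ s in (0:ℝ)..t, lconv (fun r => exp (-r)) y s * y s)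
        + 2 * (∫ s in (0:ℝ)..t, lconv (fun r => exp (-r)) y' s * y' s) := by
  have hy_cont : Continuous y := continuous_iff_continuousAt.2 fun s => (hy s).continuousAt
  have hw := hasDerivAt_lconv_exp_neg hy_cont
  set w := lconv (fun r => exp (-r)) y
  set z : ℝ → ℝ := fun s => y s - exp (-s) * y 0 - w s
  have hw_cont : Continuous w := continuous_iff_continuousAt.2 fun s => (hw s).continuousAt
  have hz : ∀ s, HasDerivAt z (y' s - z s) s := fun s =>
    (((hy s).sub ((hasDerivAt_neg s).exp.mul_const (y 0))).sub (hw s)).congr_deriv (by ring)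
  have hz_cont : Continuous z := by fun_prop
  have hz_eq : ∀ s ∈ Set.uIcc 0 t, lconv (fun r => exp (-r)) y' s = z s := fun s hs =>
    lconv_exp_neg_of_hasDerivAt (fun u _ => hy u)
      (hy'.mono_set (Set.uIcc_subset_uIcc Set.left_mem_uIcc hs))
  have hz_energy : ∫ s in (0:ℝ)..t, z s ^ 2
      ≤ ∫ s in (0:ℝ)..t, lconv (fun r => exp (-r)) y' s * y' s := by
    have hconv : ∫ s in (0:ℝ)..t, lconv (fun r => exp (-r)) y' s * y' s
        = ∫ s in (0:ℝ)..t, z s * y' s :=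
      intervalIntegral.integral_congr fun s hs => by simp only [hz_eq s hs]
    rw [hconv, integral_mul_eq_of_hasDerivAt_sub (fun s _ => hz s) (by simp [z, w, lconv]) hy']
    linarith [sq_nonneg (z t)]
  have hpointwise : ∫ s in (0:ℝ)..t, y s ^ 2
      ≤ ∫ s in (0:ℝ)..t, (2 * (w s * y s) + 2 * z s ^ 2 + 2 * (exp (-s) * y 0) ^ 2) :=
    intervalIntegral.integral_mono_on ht ((hy_cont.pow 2).intervalIntegrable _ _)
      ((by fun_prop : Continuous _).intervalIntegrable _ _) fun s _ => by
        nlinarith [sq_nonneg (z s - exp (-s) * y 0), sq_nonneg (w s)]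
  rw [intervalIntegral.integral_add, intervalIntegral.integral_add,
    intervalIntegral.integral_const_mul, intervalIntegral.integral_const_mul,
    intervalIntegral.integral_const_mul] at hpointwise
  · linarith [integral_exp_neg_mul_sq_le (y 0) t]
  all_goals exact (by fun_prop : Continuous _).intervalIntegrable _ _

theorem memory_L2_control_general (K : ℝ → ℝ) (η : ℝ) (hη : 0 < η)
    (hstrong : ∀ (v : ℝ → ℝ) (t : ℝ), 0 < t →
      η * ∫ s in (0:ℝ)..t, lconv (fun r => Real.exp (-r)) v s * v s
        ≤ ∫ s in (0:ℝ)..t, lconv K v s * v s)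
    (y y' : ℝ → ℝ) (hy : ∀ s, HasDerivAt y (y' s) s)
    (hy'2 : ∀ t > (0:ℝ), MemLp y' 2 (volume.restrict (Set.Ioc 0 t))) :
    ∀ t > (0:ℝ),
      ∫ s in (0:ℝ)..t, (y s) ^ 2
        ≤ (y 0) ^ 2 + 2 * η⁻¹ * (∫ s in (0:ℝ)..t, lconv K y s * y s)
          + 2 * η⁻¹ * (∫ s in (0:ℝ)..t, lconv K y' s * y' s) := by
  intro t ht
  have hy' : IntervalIntegrable y' volume 0 t :=
    (intervalIntegrable_iff_integrableOn_Ioc_of_le ht.le).2 ((hy'2 t ht).integrable one_le_two)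
  have hKy := (le_inv_mul_iff₀ hη).2 (hstrong y t ht)
  have hKy' := (le_inv_mul_iff₀ hη).2 (hstrong y' t ht)
  linarith [integral_sq_le_lconv_exp_neg ht.le hy hy']

/-- If `K` is strongly positive with constant `η` and `y` has derivative `y'`, both locally
square integrable, then the memory quadratic forms control the `L²` norm of `y`:
`∫₀^t y² ds ≤ y(0)² + 2η⁻¹ ∫₀^t (K∗y) y ds + 2η⁻¹ ∫₀^t (K∗y') y' ds`. -/
theorem memory_L2_control (K : ℝ → ℝ) (η : ℝ) (hη : 0 < η)
    (hKloc : LocallyIntegrableOn K (Set.Ioi 0))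
    (hstrong : ∀ (v : ℝ → ℝ) (t : ℝ), 0 < t →
      η * ∫ s in (0:ℝ)..t, lconv (fun r => Real.exp (-r)) v s * v s
        ≤ ∫ s in (0:ℝ)..t, lconv K v s * v s)
    (y y' : ℝ → ℝ) (hy : ∀ s, HasDerivAt y (y' s) s)
    (hy2 : ∀ t > (0:ℝ), MemLp y 2 (volume.restrict (Set.Ioc 0 t)))
    (hy'2 : ∀ t > (0:ℝ), MemLp y' 2 (volume.restrict (Set.Ioc 0 t))) :
    ∀ t > (0:ℝ),
      ∫ s in (0:ℝ)..t, (y s) ^ 2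
        ≤ (y 0) ^ 2 + 2 * η⁻¹ * (∫ s in (0:ℝ)..t, lconv K y s * y s)
          + 2 * η⁻¹ * (∫ s in (0:ℝ)..t, lconv K y' s * y' s) :=
  memory_L2_control_general K η hη hstrong y y' hy hy'2
end

section
/- Let η > 0 and let K ∈ L¹_loc(0,∞) be strongly positive with constant η. Let y ∈ L²(0,T) with y' ∈ L²(0,T). Then ∫₀^T y(s)² ds ≤ y(0)² + 2η^{-1} [ ∫₀^T (K∗y)(s) y(s) ds + ∫₀^T (K∗y')(s) y'(s) ds ], where each of the terms ∫₀^T (K∗y)(s)y(s) ds and ∫₀^T (K∗y')(s)y'(s) ds is ≥ 0. -/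
open MeasureTheory

/-- Auxiliary primitive `∫₀^s e^u y(u) du`. -/
noncomputable def auxA (y : ℝ → ℝ) (s : ℝ) : ℝ := ∫ u in (0:ℝ)..s, Real.exp u * y u

/-- Auxiliary primitive of `e^u y'(u)`, via integration by parts. -/
noncomputable def auxB (y : ℝ → ℝ) (s : ℝ) : ℝ := Real.exp s * y s - y 0 - auxA y s

/-- The exponential kernel convolution in factored form. -/
theorem lconv_exp (v : ℝ → ℝ) (s : ℝ) :
    lconv (fun r => Real.exp (-r)) v s
      = Real.exp (-s) * ∫ u in (0:ℝ)..s, Real.exp u * v u := by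
  have h2 := intervalIntegral.integral_comp_sub_left (a := (0:ℝ)) (b := s)
    (fun x => Real.exp x * v x) s
  simp only [sub_self, sub_zero] at h2
  calc lconv (fun r => Real.exp (-r)) v s
      = ∫ u in (0:ℝ)..s, Real.exp (-s) * (Real.exp (s - u) * v (s - u)) := by
        unfold lconv
        refine intervalIntegral.integral_congr fun u _ => ?_
        rw [← mul_assoc, ← Real.exp_add]
        have h : -s + (s - u) = -u := by ring
        rw [h]
    _ = Real.exp (-s) * ∫ u in (0:ℝ)..s, Real.exp (s - u) * v (s - u) :=
        intervalIntegral.integral_const_mul _ _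
    _ = Real.exp (-s) * ∫ u in (0:ℝ)..s, Real.exp u * v u := by rw [h2]

/-- For a strongly positive kernel `K` (with constant `η`), the `L²` norm of `y` is
controlled by the sum of the two memory quadratic forms, each of which is individually
nonnegative:
`∫₀^T y² ≤ y(0)² + 2η⁻¹ (∫₀^T (K∗y) y + ∫₀^T (K∗y') y')`, with
`∫₀^T (K∗y) y ≥ 0` and `∫₀^T (K∗y') y' ≥ 0`. -/
theorem memory_quadratic_forms_control (K : ℝ → ℝ) (η : ℝ) (hη : 0 < η)
    (hKloc : LocallyIntegrableOn K (Set.Ioi 0))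
    (hstrong : ∀ (v : ℝ → ℝ) (t : ℝ), 0 < t →
      η * ∫ s in (0:ℝ)..t, lconv (fun r => Real.exp (-r)) v s * v s
        ≤ ∫ s in (0:ℝ)..t, lconv K v s * v s)
    (T : ℝ) (hT : 0 < T) (y y' : ℝ → ℝ)
    (hy : ∀ s, HasDerivAt y (y' s) s)
    (hy2 : MemLp y 2 (volume.restrict (Set.Ioc 0 T)))
    (hy'2 : MemLp y' 2 (volume.restrict (Set.Ioc 0 T))) :
    (∫ s in (0:ℝ)..T, (y s) ^ 2
      ≤ (y 0) ^ 2 + 2 * η⁻¹ * ((∫ s in (0:ℝ)..T, lconv K y s * y s)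
          + (∫ s in (0:ℝ)..T, lconv K y' s * y' s))) ∧
    (0 ≤ ∫ s in (0:ℝ)..T, lconv K y s * y s) ∧
    (0 ≤ ∫ s in (0:ℝ)..T, lconv K y' s * y' s) := by
  have hT' : (0:ℝ) ≤ T := hT.le
  have hycont : Continuous y := continuous_iff_continuousAt.mpr fun s => (hy s).continuousAt
  -- y' is interval integrable on [0, T]
  haveI hfin : IsFiniteMeasure (volume.restrict (Set.Ioc (0:ℝ) T)) := by
    constructor
    rw [Measure.restrict_apply_univ]
    simp [Real.volume_Ioc]
  have hy'int : IntervalIntegrable y' volume 0 T := by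
    rw [intervalIntegrable_iff_integrableOn_Ioc_of_le hT']
    exact hy'2.integrable one_le_two
  have hy'eint : IntervalIntegrable (fun u => Real.exp u * y' u) volume 0 T :=
    hy'int.continuousOn_mul Real.continuous_exp.continuousOn
  -- the primitive A and its derivative
  have haA : ∀ s, HasDerivAt (auxA y) (Real.exp s * y s) s := fun s =>
    ((Real.continuous_exp.mul hycont).integral_hasStrictDerivAt 0 s).hasDerivAt
  have hAc : Continuous (auxA y) :=
    continuous_iff_continuousAt.mpr fun s => (haA s).continuousAt
  have hBd : ∀ s, HasDerivAt (auxB y) (Real.exp s * y' s) s := by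
    intro s
    have h := (((Real.hasDerivAt_exp s).mul (hy s)).sub_const (y 0)).sub (haA s)
    refine h.congr_deriv (Eq.symm ?_)
    ring
  have hBc : Continuous (auxB y) :=
    continuous_iff_continuousAt.mpr fun s => (hBd s).continuousAt
  -- B is the primitive of e^u y'
  have hBint : ∀ s ∈ Set.uIcc (0:ℝ) T,
      (∫ u in (0:ℝ)..s, Real.exp u * y' u) = auxB y s := by
    intro s hs
    have hsub : Set.uIcc (0:ℝ) s ⊆ Set.uIcc (0:ℝ) T :=
      Set.uIcc_subset_uIcc Set.left_mem_uIcc hs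
    have hIy' : IntervalIntegrable (fun u => Real.exp u * y' u) volume 0 s :=
      hy'eint.mono_set hsub
    have hIy : IntervalIntegrable (fun u => Real.exp u * y u) volume 0 s :=
      (Real.continuous_exp.mul hycont).intervalIntegrable 0 s
    have hftc : ∫ u in (0:ℝ)..s, (Real.exp u * y u + Real.exp u * y' u)
        = Real.exp s * y s - Real.exp 0 * y 0 := by
      apply intervalIntegral.integral_eq_sub_of_hasDerivAt
        (f := fun u => Real.exp u * y u)
      · exact fun u _ => (Real.hasDerivAt_exp u).mul (hy u)
      · exact hIy.add hIy'
    rw [intervalIntegral.integral_add hIy hIy'] at hftc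
    have h2 : (∫ u in (0:ℝ)..s, Real.exp u * y u) = auxA y s := rfl
    rw [h2] at hftc
    simp only [Real.exp_zero, one_mul] at hftc
    rw [auxB]
    linarith
  -- weight and the two resolvent functions
  set w : ℝ → ℝ := fun s => Real.exp (-s) with hw_def
  have hwc : Continuous w := Real.continuous_exp.comp continuous_neg
  have hwd : ∀ s, HasDerivAt w (-w s) s := by
    intro s
    have h := ((hasDerivAt_id s).neg).exp
    refine h.congr_deriv (Eq.symm ?_)
    simp [hw_def]
  have hwexp : ∀ s, w s * Real.exp s = 1 := by
    intro s
    rw [hw_def]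
    rw [← Real.exp_add]
    simp
  set Pa : ℝ → ℝ := fun s => w s * auxA y s with hPa_def
  set Pb : ℝ → ℝ := fun s => w s * auxB y s with hPb_def
  have hPac : Continuous Pa := hwc.mul hAc
  have hPbc : Continuous Pb := hwc.mul hBc
  have hPad : ∀ s, HasDerivAt Pa (y s - Pa s) s := by
    intro s
    have h := (hwd s).mul (haA s)
    refine h.congr_deriv (Eq.symm ?_)
    have h1 := hwexp s
    simp only [hPa_def]
    linear_combination (- y s) * h1
  have hPbd : ∀ s, HasDerivAt Pb (y' s - Pb s) s := by
    intro s
    have h := (hwd s).mul (hBd s)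
    refine h.congr_deriv (Eq.symm ?_)
    have h1 := hwexp s
    simp only [hPb_def]
    linear_combination (- y' s) * h1
  have hPa0 : Pa 0 = 0 := by
    simp [hPa_def, auxA]
  have hPb0 : Pb 0 = 0 := by
    simp [hPb_def, auxB, auxA]
  -- pointwise decomposition y = Pa + Pb + y 0 * w
  have hdec : ∀ s, y s = Pa s + Pb s + y 0 * w s := by
    intro s
    have h1 := hwexp s
    simp only [hPa_def, hPb_def, auxB]
    linear_combination (- y s) * h1
  -- interval integrabilities
  have hPaY : IntervalIntegrable (fun s => Pa s * y s) volume 0 T :=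
    ((hPac.mul hycont).intervalIntegrable 0 T)
  have hPa2 : IntervalIntegrable (fun s => Pa s ^ 2) volume 0 T :=
    ((hPac.pow 2).intervalIntegrable 0 T)
  have hPbY' : IntervalIntegrable (fun s => Pb s * y' s) volume 0 T :=
    hy'int.continuousOn_mul hPbc.continuousOn
  have hPb2 : IntervalIntegrable (fun s => Pb s ^ 2) volume 0 T :=
    ((hPbc.pow 2).intervalIntegrable 0 T)
  have hY2 : IntervalIntegrable (fun s => y s ^ 2) volume 0 T :=
    ((hycont.pow 2).intervalIntegrable 0 T)
  have hW2 : IntervalIntegrable (fun s => w s ^ 2) volume 0 T :=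
    ((hwc.pow 2).intervalIntegrable 0 T)
  have hS2i : IntervalIntegrable (fun s => (Pb s - y 0 * w s) ^ 2) volume 0 T :=
    (((hPbc.sub (continuous_const.mul hwc)).pow 2).intervalIntegrable 0 T)
  -- FTC identity 1 : ∫ (Pa y - Pa²) = Pa T²/2
  have I1 : (∫ s in (0:ℝ)..T, (Pa s * y s - Pa s ^ 2))
      = Pa T ^ 2 / 2 - Pa 0 ^ 2 / 2 := by
    apply intervalIntegral.integral_eq_sub_of_hasDerivAt (f := fun s => Pa s ^ 2 / 2)
    · intro s _
      have h := ((hPad s).pow 2).div_const 2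
      refine h.congr_deriv (Eq.symm ?_)
      push_cast
      ring
    · exact hPaY.sub hPa2
  -- FTC identity 2 : ∫ (Pb y' - Pb²) = Pb T²/2
  have I2 : (∫ s in (0:ℝ)..T, (Pb s * y' s - Pb s ^ 2))
      = Pb T ^ 2 / 2 - Pb 0 ^ 2 / 2 := by
    apply intervalIntegral.integral_eq_sub_of_hasDerivAt (f := fun s => Pb s ^ 2 / 2)
    · intro s _
      have h := ((hPbd s).pow 2).div_const 2
      refine h.congr_deriv (Eq.symm ?_)
      push_cast
      ring
    · exact hPbY'.sub hPb2
  -- FTC identity 3 : ∫ w² = 1/2 - w T²/2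
  have I3 : (∫ s in (0:ℝ)..T, w s ^ 2) = 1 / 2 - w T ^ 2 / 2 := by
    have h3 : (∫ s in (0:ℝ)..T, w s ^ 2)
        = -(w T ^ 2) / 2 - -(w 0 ^ 2) / 2 := by
      apply intervalIntegral.integral_eq_sub_of_hasDerivAt (f := fun s => -(w s ^ 2) / 2)
      · intro s _
        have h := (((hwd s).pow 2).neg).div_const 2
        refine h.congr_deriv (Eq.symm ?_)
        push_cast
        ring
      · exact hW2
    have hw0 : w 0 = 1 := by simp [hw_def]
    rw [h3, hw0]
    ring
  -- identify the exponential quadratic forms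
  have EQy : (∫ s in (0:ℝ)..T, lconv (fun r => Real.exp (-r)) y s * y s)
      = ∫ s in (0:ℝ)..T, Pa s * y s := by
    refine intervalIntegral.integral_congr fun s _ => ?_
    rw [lconv_exp y s]
    simp only [hPa_def, hw_def]
    rfl
  have EQy' : (∫ s in (0:ℝ)..T, lconv (fun r => Real.exp (-r)) y' s * y' s)
      = ∫ s in (0:ℝ)..T, Pb s * y' s := by
    refine intervalIntegral.integral_congr fun s hs => ?_
    rw [lconv_exp y' s, hBint s hs]
  -- split quadratic form values
  have I1' : (∫ s in (0:ℝ)..T, Pa s * y s)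
      = Pa T ^ 2 / 2 + ∫ s in (0:ℝ)..T, Pa s ^ 2 := by
    rw [intervalIntegral.integral_sub hPaY hPa2, hPa0] at I1
    linarith
  have I2' : (∫ s in (0:ℝ)..T, Pb s * y' s)
      = Pb T ^ 2 / 2 + ∫ s in (0:ℝ)..T, Pb s ^ 2 := by
    rw [intervalIntegral.integral_sub hPbY' hPb2, hPb0] at I2
    linarith
  have hS1pos : 0 ≤ ∫ s in (0:ℝ)..T, Pa s ^ 2 :=
    intervalIntegral.integral_nonneg hT' fun u _ => sq_nonneg _
  have hSBpos : 0 ≤ ∫ s in (0:ℝ)..T, Pb s ^ 2 :=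
    intervalIntegral.integral_nonneg hT' fun u _ => sq_nonneg _
  have hS2pos : 0 ≤ ∫ s in (0:ℝ)..T, (Pb s - y 0 * w s) ^ 2 :=
    intervalIntegral.integral_nonneg hT' fun u _ => sq_nonneg _
  have hQApos : 0 ≤ ∫ s in (0:ℝ)..T, Pa s * y s := by
    rw [I1']
    have := sq_nonneg (Pa T)
    linarith
  have hQBpos : 0 ≤ ∫ s in (0:ℝ)..T, Pb s * y' s := by
    rw [I2']
    have := sq_nonneg (Pb T)
    linarith
  -- the two splittings of the master integral
  have L : (∫ s in (0:ℝ)..T, (2 * (Pa s * y s) + 2 * (Pb s * y' s) - y s ^ 2))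
      = 2 * (∫ s in (0:ℝ)..T, Pa s * y s) + 2 * (∫ s in (0:ℝ)..T, Pb s * y' s)
        - ∫ s in (0:ℝ)..T, y s ^ 2 := by
    rw [intervalIntegral.integral_sub ((hPaY.const_mul 2).add (hPbY'.const_mul 2)) hY2,
      intervalIntegral.integral_add (hPaY.const_mul 2) (hPbY'.const_mul 2),
      intervalIntegral.integral_const_mul, intervalIntegral.integral_const_mul]
  have R : (∫ s in (0:ℝ)..T, (2 * (Pa s * y s) + 2 * (Pb s * y' s) - y s ^ 2))
      = 2 * (∫ s in (0:ℝ)..T, (Pb s * y' s - Pb s ^ 2))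
        + ((∫ s in (0:ℝ)..T, Pa s ^ 2)
          + ((∫ s in (0:ℝ)..T, (Pb s - y 0 * w s) ^ 2)
            - 2 * (y 0) ^ 2 * ∫ s in (0:ℝ)..T, w s ^ 2)) := by
    have hpt : ∀ s, 2 * (Pa s * y s) + 2 * (Pb s * y' s) - y s ^ 2
        = 2 * (Pb s * y' s - Pb s ^ 2)
          + (Pa s ^ 2 + ((Pb s - y 0 * w s) ^ 2 - 2 * (y 0) ^ 2 * w s ^ 2)) := by
      intro s
      have h := hdec s
      rw [h]
      ring
    rw [intervalIntegral.integral_congr fun s _ => hpt s]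
    rw [intervalIntegral.integral_add ((hPbY'.sub hPb2).const_mul 2)
        (hPa2.add (hS2i.sub (hW2.const_mul (2 * (y 0) ^ 2)))),
      intervalIntegral.integral_add hPa2 (hS2i.sub (hW2.const_mul (2 * (y 0) ^ 2))),
      intervalIntegral.integral_sub hS2i (hW2.const_mul (2 * (y 0) ^ 2)),
      intervalIntegral.integral_const_mul, intervalIntegral.integral_const_mul]
  -- the main energy inequality for the exponential kernel
  have hmain : (∫ s in (0:ℝ)..T, y s ^ 2)
      ≤ (y 0) ^ 2 + 2 * (∫ s in (0:ℝ)..T, Pa s * y s)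
        + 2 * (∫ s in (0:ℝ)..T, Pb s * y' s) := by
    rw [I2, hPb0, I3] at R
    have h1 := sq_nonneg (Pb T)
    have h2 : 0 ≤ (y 0) ^ 2 * w T ^ 2 := mul_nonneg (sq_nonneg _) (sq_nonneg _)
    nlinarith [L, R, hS1pos, hS2pos]
  -- use strong positivity
  have hKy := hstrong y T hT
  have hKy' := hstrong y' T hT
  rw [EQy] at hKy
  rw [EQy'] at hKy'
  have hinv : (0:ℝ) ≤ η⁻¹ := (inv_pos.mpr hη).le
  have hA' : (∫ s in (0:ℝ)..T, Pa s * y s)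
      ≤ η⁻¹ * ∫ s in (0:ℝ)..T, lconv K y s * y s := by
    have h := mul_le_mul_of_nonneg_left hKy hinv
    rwa [← mul_assoc, inv_mul_cancel₀ hη.ne', one_mul] at h
  have hB' : (∫ s in (0:ℝ)..T, Pb s * y' s)
      ≤ η⁻¹ * ∫ s in (0:ℝ)..T, lconv K y' s * y' s := by
    have h := mul_le_mul_of_nonneg_left hKy' hinv
    rwa [← mul_assoc, inv_mul_cancel₀ hη.ne', one_mul] at h
  refine ⟨?_, ?_, ?_⟩
  · have : 2 * η⁻¹ * ((∫ s in (0:ℝ)..T, lconv K y s * y s)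
        + (∫ s in (0:ℝ)..T, lconv K y' s * y' s))
        = 2 * (η⁻¹ * ∫ s in (0:ℝ)..T, lconv K y s * y s)
          + 2 * (η⁻¹ * ∫ s in (0:ℝ)..T, lconv K y' s * y' s) := by ring
    rw [this]
    linarith [hmain, hA', hB']
  · have h0 : 0 ≤ η * ∫ s in (0:ℝ)..T, Pa s * y s := mul_nonneg hη.le hQApos
    linarith [hKy]
  · have h0 : 0 ≤ η * ∫ s in (0:ℝ)..T, Pb s * y' s := mul_nonneg hη.le hQBpos
    linarith [hKy']
end
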